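/- Let a, b, n be positive integers with b < a < n, a + b + 1 ≡ 2bn + 2 (mod 4), and (a + b + 1)² > 4bn + 4. Set s = (a + b + 3)/2 (an integer since a + b is odd). Then the sequence (a^s, b^{n−s}) has even sum, has length n, maximal element a, minimal element b, and is nongraphic. -/
import Mathlib


/-- A sequence of length `n` is graphic if it is the degree sequence of some
finite simple graph on `n` vertices. -/
def IsGraphic {n : ℕ} (d : Fin n → ℕ) : Prop :=
  ∃ G : SimpleGraph (Fin n), ∀ i, (G.neighborSet i).ncard = d i

/-- `twoBlock a b s : Fin n → ℕ` is the sequence `(a^s, b^{n-s})`. -/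
def twoBlock (a b s : ℕ) {n : ℕ} : Fin n → ℕ := fun i => if (i : ℕ) < s then a else b

lemma sum_twoBlock (a b s : ℕ) {n : ℕ} (hsn : s ≤ n) :
    ∑ i : Fin n, twoBlock a b s i = s * a + (n - s) * b := by
  have h0 : ∑ i : Fin n, twoBlock a b s i
      = ∑ i ∈ Finset.range n, (if i < s then a else b) :=
    Fin.sum_univ_eq_sum_range (fun i => if i < s then a else b) n
  rw [h0, Finset.range_eq_Ico, ← Finset.sum_Ico_consecutive _ (Nat.zero_le s) hsn]
  have h1 : ∑ i ∈ Finset.Ico 0 s, (if i < s then a else b) = s * a := by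
    rw [Finset.sum_congr rfl fun i hi => if_pos (Finset.mem_Ico.mp hi).2]
    simp [Finset.sum_const, Nat.card_Ico, mul_comm]
  have h2 : ∑ i ∈ Finset.Ico s n, (if i < s then a else b) = (n - s) * b := by
    rw [Finset.sum_congr rfl fun i hi => if_neg (Nat.not_lt.2 (Finset.mem_Ico.mp hi).1)]
    simp [Finset.sum_const, Nat.card_Ico, mul_comm]
  rw [h1, h2]

lemma deg_sum_bound {V : Type*} [Fintype V] [DecidableEq V] (G : SimpleGraph V)
    [DecidableRel G.Adj] (S : Finset V) :
    ∑ i ∈ S, G.degree i ≤ S.card * (S.card - 1) + ∑ j ∈ Sᶜ, G.degree j := by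
  have hdeg : ∀ i, G.degree i = ∑ j ∈ Finset.univ, (if G.Adj i j then 1 else 0) := by
    intro i
    rw [← SimpleGraph.card_neighborFinset_eq_degree, SimpleGraph.neighborFinset_eq_filter,
      Finset.card_filter]
  have b1 : ∀ i ∈ S, (∑ j ∈ S, if G.Adj i j then 1 else 0) ≤ S.card - 1 := by
    intro i hi
    rw [← Finset.card_filter]
    calc (S.filter (fun j => G.Adj i j)).card ≤ (S.erase i).card := by
          refine Finset.card_le_card fun j hj => ?_
          rw [Finset.mem_filter] at hj
          exact Finset.mem_erase.mpr ⟨(G.ne_of_adj hj.2).symm, hj.1⟩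
      _ = S.card - 1 := Finset.card_erase_of_mem hi
  have b2 : (∑ i ∈ S, ∑ j ∈ Sᶜ, if G.Adj i j then 1 else 0)
      ≤ ∑ j ∈ Sᶜ, G.degree j := by
    rw [Finset.sum_comm]
    refine Finset.sum_le_sum fun j _ => ?_
    rw [← Finset.card_filter]
    have hsub : S.filter (fun i => G.Adj i j) ⊆ G.neighborFinset j := by
      intro i hi
      rw [SimpleGraph.mem_neighborFinset]
      exact ((Finset.mem_filter.mp hi).2).symm
    exact le_trans (Finset.card_le_card hsub) (le_of_eq (G.card_neighborFinset_eq_degree j))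
  calc ∑ i ∈ S, G.degree i
      = ∑ i ∈ S, ((∑ j ∈ S, if G.Adj i j then 1 else 0)
          + ∑ j ∈ Sᶜ, (if G.Adj i j then 1 else 0)) := by
        refine Finset.sum_congr rfl fun i _ => ?_
        rw [hdeg i, Finset.sum_add_sum_compl]
    _ = (∑ i ∈ S, ∑ j ∈ S, if G.Adj i j then 1 else 0)
        + ∑ i ∈ S, ∑ j ∈ Sᶜ, (if G.Adj i j then 1 else 0) := Finset.sum_add_distrib
    _ ≤ S.card * (S.card - 1) + ∑ j ∈ Sᶜ, G.degree j := by
        refine add_le_add ?_ b2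
        calc (∑ i ∈ S, ∑ j ∈ S, if G.Adj i j then 1 else 0)
            ≤ ∑ i ∈ S, (S.card - 1) := Finset.sum_le_sum b1
          _ = S.card * (S.card - 1) := by rw [Finset.sum_const, smul_eq_mul]


/-- Case (II) of sharpness: if `b < a < n`, `a + b + 1 ≡ 2bn + 2 (mod 4)` and
`(a+b+1)² > 4bn + 4`, then with `s = (a+b+3)/2` the sequence `(a^s, b^{n-s})` has
even sum, maximal element `a`, minimal element `b`, and is nongraphic. -/
theorem sharpness_case_II (a b n : ℕ) (hb : 0 < b) (hba : b < a) (han : a < n)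
    (hmod : a + b + 1 ≡ 2 * b * n + 2 [MOD 4]) (hgt : (a + b + 1) ^ 2 > 4 * (b * n) + 4) :
    Even (∑ i : Fin n, twoBlock a b ((a + b + 3) / 2) i) ∧
      twoBlock a b ((a + b + 3) / 2) (n := n) ⟨0, by omega⟩ = a ∧
      twoBlock a b ((a + b + 3) / 2) (n := n) ⟨n - 1, by omega⟩ = b ∧
      ¬ IsGraphic (twoBlock a b ((a + b + 3) / 2) (n := n)) := by
  classical
  have hmod4 : (a + b + 1) % 4 = (2 * (b * n) + 2) % 4 := by
    have h := hmod
    unfold Nat.ModEq at h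
    rwa [mul_assoc] at h
  set s := (a + b + 3) / 2 with hsdef
  clear_value s
  have hs2 : 2 * s = a + b + 3 := by omega
  clear hsdef hmod
  have hbs : b < s := by omega
  have hsn' : s ≤ n := by omega
  -- rule out s = n using hgt
  have hsn : s ≤ n - 1 := by
    rcases Nat.lt_or_ge s n with h | h
    · omega
    · exfalso
      have hsn'' : s = n := le_antisymm hsn' h
      have ha' : a = n - 1 := by omega
      have hb' : b = n - 2 := by omega
      obtain ⟨k, rfl⟩ : ∃ k, n = k + 3 := ⟨n - 3, by omega⟩
      have ea : a = k + 2 := by omega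
      have eb : b = k + 1 := by omega
      subst ea eb
      have : (k + 2 + (k + 1) + 1) ^ 2 = 4 * ((k + 1) * (k + 3)) + 4 := by ring
      omega
  have hspar : s % 2 = (b * n) % 2 := by omega
  constructor
  · rw [sum_twoBlock a b s hsn']
    rw [Nat.even_add, Nat.even_mul, Nat.even_mul, Nat.even_sub hsn']
    have h1 : ¬ (Even a ↔ Even b) := by
      rw [Nat.even_iff, Nat.even_iff]; omega
    have h2 : Even s ↔ (Even b ∨ Even n) := by
      rw [← Nat.even_mul, Nat.even_iff, Nat.even_iff]; omega
    tauto
  refine ⟨?_, ?_, ?_⟩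
  · show (if ((⟨0, by omega⟩ : Fin n) : ℕ) < s then a else b) = a
    exact if_pos (by simp; omega)
  · show (if ((⟨n - 1, by omega⟩ : Fin n) : ℕ) < s then a else b) = b
    exact if_neg (by simp; omega)
  · rintro ⟨G, hG⟩
    have hd : ∀ i, G.degree i = twoBlock a b s i := by
      intro i
      rw [← hG i, ← SimpleGraph.card_neighborFinset_eq_degree, SimpleGraph.neighborFinset_def]
      exact (Set.ncard_eq_toFinset_card' _).symm
    set S : Finset (Fin n) := Finset.univ.filter (fun i => (i : ℕ) < s) with hS
    have hScard : S.card = s := by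
      rw [hS, Finset.card_filter]
      have h := sum_twoBlock 1 0 s (n := n) hsn'
      simpa [twoBlock] using h
    have hcompl : Sᶜ.card = n - s := by
      rw [Finset.card_compl, hScard, Fintype.card_fin]
    have hsum1 : ∑ i ∈ S, G.degree i = s * a := by
      rw [Finset.sum_congr rfl (fun i hi => ?_), Finset.sum_const, smul_eq_mul, hScard]
      rw [hd i]
      exact if_pos (Finset.mem_filter.mp hi).2
    have hsum2 : ∑ j ∈ Sᶜ, G.degree j = (n - s) * b := by
      rw [Finset.sum_congr rfl (fun j hj => ?_), Finset.sum_const, smul_eq_mul, hcompl]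
      rw [hd j]
      refine if_neg ?_
      have := Finset.mem_compl.mp hj
      simp [hS] at this
      omega
    have hkey := deg_sum_bound G S
    rw [hsum1, hsum2, hScard] at hkey
    -- now derive a contradiction
    obtain ⟨p, rfl⟩ : ∃ p, a = b + p + 1 := ⟨a - b - 1, by omega⟩
    obtain ⟨q, rfl⟩ : ∃ q, p = 2 * q := ⟨p / 2, by omega⟩
    have hsval : s = b + q + 2 := by omega
    subst hsval
    obtain ⟨t, rfl⟩ : ∃ t, n = b + q + 2 + t := ⟨n - (b + q + 2), by omega⟩
    have e1 : b + q + 2 - 1 = b + q + 1 := by omega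
    have e2 : b + q + 2 + t - (b + q + 2) = t := by omega
    rw [e1, e2] at hkey
    nlinarith [hkey, hgt]
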